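/- The delay game Γ_f(L) and the delay-free game Γ(shift_f(L)) are equivalent for Player O: Player O has a winning strategy in the delay game Γ_f(L) if and only if Player O has a winning strategy in the Gale-Stewart game with winning condition shift_f(L). -/

import Mathlib

open scoped Classical MeasureTheory

section DelayGames

variable {I O A B : Type}

/-- `shiftSeq f β = ▷^{f 0 - 1} β 0 ▷^{f 1 - 1} β 1 ⋯`, where the skip symbol `▷`
is modeled by `none` and a letter `b ∈ Σ_O` by `some b`. -/
noncomputable def shiftSeq (f : ℕ → ℕ) (β : ℕ → O) : ℕ → Option O := fun n =>
  if h : ∃ i, (∑ j ∈ Finset.range (i + 1), f j) = n + 1 then some (β (Nat.find h))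
  else none

/-- `shift_f(L) = { (α, shift_f(β)) : (α, β) ∈ L }`. -/
def shiftLang (f : ℕ → ℕ) (L : Set ((ℕ → I) × (ℕ → O))) :
    Set ((ℕ → I) × (ℕ → Option O)) :=
  {p | ∃ β : ℕ → O, (p.1, β) ∈ L ∧ p.2 = shiftSeq f β}

/-- The morphism `h` erasing the skip symbol, applied to an infinite word
(meaningful when the word has infinitely many non-skip letters). -/
noncomputable def eraseSkips [Inhabited O] (β : ℕ → Option O) : ℕ → O := fun n =>
  (β (Nat.nth (fun k => (β k).isSome) n)).getD default

/-- `skip(L) = ⋃_f shift_f(L) = { (α,β) : β has infinitely many non-▷ letters and (α, h β) ∈ L }`. -/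
def skipLang [Inhabited O] (L : Set ((ℕ → I) × (ℕ → O))) :
    Set ((ℕ → I) × (ℕ → Option O)) :=
  {p | {k | (p.2 k).isSome}.Infinite ∧ (p.1, eraseSkips p.2) ∈ L}

/-- A play of a Gale-Stewart game is consistent with the Player O strategy `σ`. -/
def gsConsO (σ : List A → B) (α : ℕ → A) (β : ℕ → B) : Prop :=
  ∀ i, β i = σ (List.ofFn fun j : Fin (i + 1) => α j)

/-- A play of a Gale-Stewart game is consistent with the Player I strategy `τ`. -/
def gsConsI (τ : List B → A) (α : ℕ → A) (β : ℕ → B) : Prop :=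
  ∀ i, α i = τ (List.ofFn fun j : Fin i => β j)

/-- `σ` is a winning strategy for Player O in the Gale-Stewart game with winning condition `W`. -/
def gsWinO (W : Set ((ℕ → A) × (ℕ → B))) (σ : List A → B) : Prop :=
  ∀ α β, gsConsO σ α β → (α, β) ∈ W

/-- `τ` is a winning strategy for Player I in the Gale-Stewart game with winning condition `W`. -/
def gsWinI (W : Set ((ℕ → A) × (ℕ → B))) (τ : List B → A) : Prop :=
  ∀ α β, gsConsI τ α β → (α, β) ∉ W

/-- The infinite word `u 0 · u 1 · u 2 ⋯` built by Player I in a delay game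
(well-defined at position `n` as soon as the first `n+1` blocks have more than `n` letters). -/
def outcomeI [Inhabited I] (u : ℕ → List I) : ℕ → I := fun n =>
  ((List.ofFn fun j : Fin (n + 1) => u j).flatten).getD n default

/-- The word `v 0 ⋯ v (i-1)` of the first `i` letters of `v`. -/
def prefixW (v : ℕ → O) (i : ℕ) : List O := List.ofFn fun j : Fin i => v j

/-- The concatenation `u 0 · u 1 ⋯ u i` of Player I's moves up to round `i`. -/
def inputsUpTo (u : ℕ → List I) (i : ℕ) : List I :=
  (List.ofFn fun j : Fin (i + 1) => u j).flatten

/-- `τ : Σ_O^* → Σ_I^*` is a (syntactically valid) Player I strategy for the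
delay game `Γ_f(L)`: it answers with `f i` letters in round `i`. -/
def delayStratI (f : ℕ → ℕ) (τ : List O → List I) : Prop :=
  ∀ w : List O, (τ w).length = f w.length

/-- `τ` is winning for Player I in the delay game `Γ_f(L)`. -/
def delayWinI [Inhabited I] (f : ℕ → ℕ) (L : Set ((ℕ → I) × (ℕ → O)))
    (τ : List O → List I) : Prop :=
  ∀ (u : ℕ → List I) (v : ℕ → O), (∀ i, (u i).length = f i) →
    (∀ i, u i = τ (prefixW v i)) → (outcomeI u, v) ∉ L

/-- `σ : Σ_I^* → Σ_O` is winning for Player O in the delay game `Γ_f(L)`. -/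
def delayWinO [Inhabited I] (f : ℕ → ℕ) (L : Set ((ℕ → I) × (ℕ → O)))
    (σ : List I → O) : Prop :=
  ∀ (u : ℕ → List I) (v : ℕ → O), (∀ i, (u i).length = f i) →
    (∀ i, v i = σ (inputsUpTo u i)) → (outcomeI u, v) ∈ L

/-- A round-counting strategy `σ : Σ_I^* × ℕ → Σ_O` is winning for Player O in `Γ_f(L)`:
in round `i` Player O plays `σ (u 0 ⋯ u i) i`. -/
def rcWinO [Inhabited I] (f : ℕ → ℕ) (L : Set ((ℕ → I) × (ℕ → O)))
    (σ : List I → ℕ → O) : Prop :=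
  ∀ (u : ℕ → List I) (v : ℕ → O), (∀ i, (u i).length = f i) →
    (∀ i, v i = σ (inputsUpTo u i) i) → (outcomeI u, v) ∈ L

/-- An output-tracking strategy `τ : Σ_O^* → Σ_I^ω` is winning for Player I in `Γ_f(L)`:
in round `i` Player I plays the length-`f i` prefix of `τ (v 0 ⋯ v (i-1))`. -/
def otWinI [Inhabited I] (f : ℕ → ℕ) (L : Set ((ℕ → I) × (ℕ → O)))
    (τ : List O → ℕ → I) : Prop :=
  ∀ (u : ℕ → List I) (v : ℕ → O),
    (∀ i, u i = List.ofFn fun j : Fin (f i) => τ (prefixW v i) j) →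
    (outcomeI u, v) ∉ L

/-- A lookahead-counting strategy `τ : Σ_O^* × ℕ → Σ_I^ω` is winning for Player I in `Γ_f(L)`:
in round `i` Player I plays the length-`f i` prefix of `τ (v 0 ⋯ v (i-1), Σ_{j<i} f j)`. -/
def lcWinI [Inhabited I] (f : ℕ → ℕ) (L : Set ((ℕ → I) × (ℕ → O)))
    (τ : List O → ℕ → ℕ → I) : Prop :=
  ∀ (u : ℕ → List I) (v : ℕ → O),
    (∀ i, u i = List.ofFn fun j : Fin (f i) =>
      τ (prefixW v i) (∑ k ∈ Finset.range i, f k) j) →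
    (outcomeI u, v) ∉ L

/-- A history-tracking strategy `τ : Σ_O^* × (ℕ_{>0})^* → Σ_I^ω` is winning for Player I
in `Γ_f(L)`: in round `i` Player I plays the length-`f i` prefix of
`τ (v 0 ⋯ v (i-1), f 0 ⋯ f (i-1))`. -/
def htWinI [Inhabited I] (f : ℕ → ℕ) (L : Set ((ℕ → I) × (ℕ → O)))
    (τ : List O → List ℕ → ℕ → I) : Prop :=
  ∀ (u : ℕ → List I) (v : ℕ → O),
    (∀ i, u i = List.ofFn fun j : Fin (f i) => τ (prefixW v i) (prefixW f i) j) →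
    (outcomeI u, v) ∉ L

/-- `f ⊑ f'` : in every round, the lookahead granted by `f'` is at least that granted by `f`. -/
def delayLE (f f' : ℕ → ℕ) : Prop :=
  ∀ i, (∑ j ∈ Finset.range (i + 1), f j) ≤ ∑ j ∈ Finset.range (i + 1), f' j

end DelayGames

/-! Cut Player I's infinite input `α` into consecutive blocks of lengths `f 0, f 1, …`; the
`i`-th block ends at position `S i - 1`, where `S i = f 0 + ⋯ + f i`. A delay strategy `σ`
becomes a Gale-Stewart strategy that skips (`▷`) except at these block ends, where it answers
`σ` of the input read so far; the resulting output is exactly `shift_f` of the delay-game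
output. Conversely a Gale-Stewart strategy for `shift_f(L)` must answer a letter at every block
end, and reading off these letters gives a delay strategy. -/

section DelayShift

variable {I O : Type}

lemma strictMono_sum_range_succ {f : ℕ → ℕ} (hf : ∀ i, 0 < f i) :
    StrictMono fun i => ∑ j ∈ Finset.range (i + 1), f j :=
  strictMono_nat_of_lt_succ fun n => by
    rw [Finset.sum_range_succ _ (n + 1)]
    exact Nat.lt_add_of_pos_right (hf _)

lemma succ_le_sum_range_succ {f : ℕ → ℕ} (hf : ∀ i, 0 < f i) (i : ℕ) :
    i + 1 ≤ ∑ j ∈ Finset.range (i + 1), f j := by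
  simpa using Finset.card_nsmul_le_sum (Finset.range (i + 1)) f 1 fun j _ => hf j

lemma inputsUpTo_succ (u : ℕ → List I) (i : ℕ) :
    inputsUpTo u (i + 1) = inputsUpTo u i ++ u (i + 1) := by
  rw [inputsUpTo, inputsUpTo, List.ofFn_succ_last, List.flatten_concat]
  rfl

lemma length_inputsUpTo {f : ℕ → ℕ} {u : ℕ → List I} (hu : ∀ i, (u i).length = f i)
    (i : ℕ) :
    (inputsUpTo u i).length = ∑ j ∈ Finset.range (i + 1), f j := by
  induction i with
  | zero => simp [inputsUpTo, hu]
  | succ i ih =>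
    rw [inputsUpTo_succ, List.length_append, ih, hu, Finset.sum_range_succ _ (i + 1)]

lemma inputsUpTo_prefix_of_le (u : ℕ → List I) {i m : ℕ} (h : i ≤ m) :
    inputsUpTo u i <+: inputsUpTo u m := by
  induction m, h using Nat.le_induction with
  | base => exact List.prefix_refl _
  | succ m _ ih => exact ih.trans (inputsUpTo_succ u m ▸ List.prefix_append _ _)

lemma inputsUpTo_eq_ofFn_outcomeI [Inhabited I] {f : ℕ → ℕ} (hf : ∀ i, 0 < f i)
    {u : ℕ → List I} (hu : ∀ i, (u i).length = f i) (i : ℕ) :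
    inputsUpTo u i =
      List.ofFn fun j : Fin (∑ k ∈ Finset.range (i + 1), f k) => outcomeI u j := by
  refine List.ext_getElem (by rw [length_inputsUpTo hu, List.length_ofFn]) fun n hn _ => ?_
  have hn' : n < (inputsUpTo u n).length :=
    (length_inputsUpTo hu n).symm ▸ succ_le_sum_range_succ hf n
  rw [List.getElem_ofFn, outcomeI, ← inputsUpTo, List.getD_eq_getElem _ _ hn',
    (inputsUpTo_prefix_of_le u (le_max_left i n)).getElem hn,
    (inputsUpTo_prefix_of_le u (le_max_right i n)).getElem hn']

def toBlocks (f : ℕ → ℕ) (α : ℕ → I) (i : ℕ) : List I :=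
  List.ofFn fun j : Fin (f i) => α ((∑ k ∈ Finset.range i, f k) + j)

lemma length_toBlocks (f : ℕ → ℕ) (α : ℕ → I) (i : ℕ) : (toBlocks f α i).length = f i :=
  List.length_ofFn

lemma inputsUpTo_toBlocks (f : ℕ → ℕ) (α : ℕ → I) (i : ℕ) :
    inputsUpTo (toBlocks f α) i =
      List.ofFn fun j : Fin (∑ k ∈ Finset.range (i + 1), f k) => α j := by
  induction i with
  | zero => simp [inputsUpTo, toBlocks]; rfl
  | succ i ih =>
    rw [inputsUpTo_succ, ih, toBlocks, Finset.sum_range_succ _ (i + 1), List.ofFn_add]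
    simp

lemma outcomeI_toBlocks [Inhabited I] {f : ℕ → ℕ} (hf : ∀ i, 0 < f i) (α : ℕ → I) :
    outcomeI (toBlocks f α) = α := by
  funext n
  have hn : n < ∑ k ∈ Finset.range (n + 1), f k := succ_le_sum_range_succ hf n
  rw [outcomeI, ← inputsUpTo, inputsUpTo_toBlocks, List.getD_eq_getElem _ _ (by simpa using hn),
    List.getElem_ofFn]

lemma shiftSeq_of_succ_eq_sum {f : ℕ → ℕ} (hf : ∀ i, 0 < f i) (γ : ℕ → O) {n i : ℕ}
    (h : n + 1 = ∑ j ∈ Finset.range (i + 1), f j) : shiftSeq f γ n = some (γ i) := by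
  have hex : ∃ i', (∑ j ∈ Finset.range (i' + 1), f j) = n + 1 := ⟨i, h.symm⟩
  rw [shiftSeq, dif_pos hex,
    (strictMono_sum_range_succ hf).injective ((Nat.find_spec hex).trans h)]

noncomputable def shiftStrategy (f : ℕ → ℕ) (σ : List I → O) (w : List I) : Option O :=
  if ∃ i, (∑ j ∈ Finset.range (i + 1), f j) = w.length then some (σ w) else none

lemma gsWinO_shiftStrategy [Inhabited I] {f : ℕ → ℕ} (hf : ∀ i, 0 < f i)
    {L : Set ((ℕ → I) × (ℕ → O))} {σ : List I → O} (hσ : delayWinO f L σ) :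
    gsWinO (shiftLang f L) (shiftStrategy f σ) := by
  intro α β hβ
  let v i := σ (inputsUpTo (toBlocks f α) i)
  have hwin : (α, v) ∈ L :=
    outcomeI_toBlocks hf α ▸ hσ _ v (length_toBlocks f α) fun _ => rfl
  refine ⟨v, hwin, funext fun n => (hβ n).trans ?_⟩
  rw [shiftStrategy, shiftSeq, List.length_ofFn]
  split_ifs with h
  · simp only [v]
    rw [inputsUpTo_toBlocks, Nat.find_spec h]
  · rfl

lemma delayWinO_getD_of_gsWinO_shiftLang [Inhabited I] {f : ℕ → ℕ} (hf : ∀ i, 0 < f i)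
    {L : Set ((ℕ → I) × (ℕ → O))} {σ' : List I → Option O} (hσ' : gsWinO (shiftLang f L) σ')
    (b : O) : delayWinO f L fun w => (σ' w).getD b := by
  intro u v hu hv
  obtain ⟨γ, hγL, hγ⟩ := hσ' (outcomeI u) _ fun _ => rfl
  suffices v = γ from this ▸ hγL
  funext i
  obtain ⟨n, hn⟩ : ∃ n, n + 1 = ∑ j ∈ Finset.range (i + 1), f j :=
    ⟨_, Nat.sub_add_cancel (Nat.le_of_add_left_le (succ_le_sum_range_succ hf i))⟩
  have hmove := (congrFun hγ n).trans (shiftSeq_of_succ_eq_sum hf γ hn)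
  rw [hv, inputsUpTo_eq_ofFn_outcomeI hf hu, ← hn]
  exact congrArg (Option.getD · b) hmove

end DelayShift

theorem stmt8_general {I O : Type} [Inhabited I]
    (f : ℕ → ℕ) (hf : ∀ i, 0 < f i) (L : Set ((ℕ → I) × (ℕ → O))) :
    (∃ σ : List I → O, delayWinO f L σ) ↔
      (∃ σ' : List I → Option O, gsWinO (shiftLang f L) σ') := by
  constructor
  · rintro ⟨σ, hσ⟩
    exact ⟨shiftStrategy f σ, gsWinO_shiftStrategy hf hσ⟩
  · rintro ⟨σ', hσ'⟩
    -- `Σ_O` is not assumed nonempty: any play against `σ'` supplies a letter.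
    obtain ⟨γ, -⟩ := hσ' (fun _ => default) _ fun _ => rfl
    exact ⟨_, delayWinO_getD_of_gsWinO_shiftLang hf hσ' (γ 0)⟩

/-- Player O has a winning strategy in the delay game `Γ_f(L)` iff
she has one in the Gale-Stewart game `Γ(shift_f(L))`. -/
theorem stmt8 {I O : Type} [Fintype I] [Fintype O] [Inhabited I]
    (f : ℕ → ℕ) (hf : ∀ i, 0 < f i) (L : Set ((ℕ → I) × (ℕ → O))) :
    (∃ σ : List I → O, delayWinO f L σ) ↔
      (∃ σ' : List I → Option O, gsWinO (shiftLang f L) σ') :=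
  stmt8_general f hf L
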